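/- arXiv:2101.09942 — 3 statements merged into one kernel-verified Lean document; each statement's English description precedes it below -/
import Mathlib

section
/- Let n, M be natural numbers. Let t : Fin n → ℝ be strictly increasing event times and u : Fin n → Fin M their marks, and let T ∈ ℝ satisfy t i < T for all i. Let μ : Fin M → ℝ with μ k > 0 for all k, A : Fin M → Fin M → ℝ with all entries positive, β : Fin M → Fin M → ℝ with all entries positive, and d : ℝ → ℝ with d s > 0 for all s. Let p : Fin n → Fin n → ℝ satisfy p i j > 0 for all j ≤ i and p i i + ∑_{j < i} p i j = 1 for every i. Then ∑_{i} log( μ(u i) + d(t i) · ∑_{j < i} A(u i)(u j) · exp(−β(u i)(u j) · (t i − t j)) ) − ∑_{k=0}^{M−1} ( μ k · T + ∑_{j} (A k (u j) · d(T) / β k (u j)) · (1 − exp(−β k (u j) · (T − t j))) ) ≥ ∑_{i} p i i · log( μ(u i) / p i i ) + ∑_{i} ∑_{j < i} p i j · log( A(u i)(u j) · d(t i) · exp(−β(u i)(u j) · (t i − t j)) / p i j ) − ∑_{k=0}^{M−1} ( μ k · T + ∑_{j} (A k (u j) · d(T) / β k (u j)) · (1 − exp(−β k (u j) · (T − t j)))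 ). -/
open Finset

lemma jensen_log {ι : Type*} (S : Finset ι) (w y : ι → ℝ)
    (hw : ∀ j ∈ S, 0 < w j) (hy : ∀ j ∈ S, 0 < y j)
    (hsum : ∑ j ∈ S, w j = 1) :
    ∑ j ∈ S, w j * Real.log (y j / w j) ≤ Real.log (∑ j ∈ S, y j) := by
  have h := (strictConcaveOn_log_Ioi.concaveOn).le_map_sum
    (t := S) (w := w) (p := fun j => y j / w j)
    (fun j hj => (hw j hj).le) hsum
    (fun j hj => Set.mem_Ioi.2 (div_pos (hy j hj) (hw j hj)))
  have heq : ∑ j ∈ S, w j • (y j / w j) = ∑ j ∈ S, y j := by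
    refine Finset.sum_congr rfl fun j hj => ?_
    rw [smul_eq_mul, mul_div_cancel₀ _ (hw j hj).ne']
  simp only [smul_eq_mul] at h heq
  rwa [heq] at h

/-- the Jensen (ELBO) lower bound (9) on the log-likelihood of the
M-dimensional EAHDM model. -/
theorem eahdm_loglik_lower_bound
    (n M : ℕ) (t : Fin n → ℝ) (ht : StrictMono t)
    (u : Fin n → Fin M) (T : ℝ) (hT : ∀ i, t i < T)
    (μ : Fin M → ℝ) (hμ : ∀ k, 0 < μ k)
    (A : Fin M → Fin M → ℝ) (hA : ∀ k l, 0 < A k l)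
    (β : Fin M → Fin M → ℝ) (hβ : ∀ k l, 0 < β k l)
    (d : ℝ → ℝ) (hd : ∀ s, 0 < d s)
    (p : Fin n → Fin n → ℝ)
    (hp : ∀ i j : Fin n, j ≤ i → 0 < p i j)
    (hpsum : ∀ i : Fin n, p i i + ∑ j ∈ univ.filter (fun j => j < i), p i j = 1) :
    (∑ i, Real.log (μ (u i) + d (t i) *
          ∑ j ∈ univ.filter (fun j => j < i),
            A (u i) (u j) * Real.exp (-(β (u i) (u j)) * (t i - t j))))
      - (∑ k, (μ k * T + ∑ j, (A k (u j) * d T / β k (u j)) *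
            (1 - Real.exp (-(β k (u j)) * (T - t j)))))
    ≥ (∑ i, p i i * Real.log (μ (u i) / p i i))
      + (∑ i, ∑ j ∈ univ.filter (fun j => j < i),
          p i j * Real.log (A (u i) (u j) * d (t i) *
            Real.exp (-(β (u i) (u j)) * (t i - t j)) / p i j))
      - (∑ k, (μ k * T + ∑ j, (A k (u j) * d T / β k (u j)) *
            (1 - Real.exp (-(β k (u j)) * (T - t j))))) := by
  have key : ∀ i : Fin n,
      p i i * Real.log (μ (u i) / p i i)
        + ∑ j ∈ univ.filter (fun j => j < i),
            p i j * Real.log (A (u i) (u j) * d (t i) *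
              Real.exp (-(β (u i) (u j)) * (t i - t j)) / p i j)
      ≤ Real.log (μ (u i) + d (t i) *
          ∑ j ∈ univ.filter (fun j => j < i),
            A (u i) (u j) * Real.exp (-(β (u i) (u j)) * (t i - t j))) := by
    intro i
    set F := univ.filter (fun j : Fin n => j < i) with hF
    have hiF : i ∉ F := by simp [hF]
    set y : Fin n → ℝ := fun j => if j = i then μ (u i)
      else A (u i) (u j) * d (t i) * Real.exp (-(β (u i) (u j)) * (t i - t j)) with hy
    have hwpos : ∀ j ∈ insert i F, 0 < p i j := by
      intro j hj
      rcases Finset.mem_insert.1 hj with h | h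
      · exact h ▸ hp i i le_rfl
      · exact hp i j (le_of_lt (by simpa [hF] using h))
    have hypos : ∀ j ∈ insert i F, 0 < y j := by
      intro j hj
      by_cases hji : j = i
      · simp [hy, hji, hμ]
      · simp only [hy, if_neg hji]
        exact mul_pos (mul_pos (hA _ _) (hd _)) (Real.exp_pos _)
    have hsum1 : ∑ j ∈ insert i F, p i j = 1 := by
      rw [Finset.sum_insert hiF]; exact hpsum i
    have hj := jensen_log (insert i F) (p i) y hwpos hypos hsum1
    rw [Finset.sum_insert hiF, Finset.sum_insert hiF] at hj
    have e1 : y i = μ (u i) := by simp [hy]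
    have e2 : ∀ j ∈ F, y j = A (u i) (u j) * d (t i) *
        Real.exp (-(β (u i) (u j)) * (t i - t j)) := by
      intro j hjF
      have : j ≠ i := fun h => hiF (h ▸ hjF)
      simp [hy, this]
    have e3 : ∑ j ∈ F, y j = d (t i) *
        ∑ j ∈ F, A (u i) (u j) * Real.exp (-(β (u i) (u j)) * (t i - t j)) := by
      rw [Finset.mul_sum]
      refine Finset.sum_congr rfl fun j hjF => ?_
      rw [e2 j hjF]; ring
    rw [e1, e3] at hj
    calc p i i * Real.log (μ (u i) / p i i)
        + ∑ j ∈ F, p i j * Real.log (A (u i) (u j) * d (t i) *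
            Real.exp (-(β (u i) (u j)) * (t i - t j)) / p i j)
        = p i i * Real.log (y i / p i i) + ∑ j ∈ F, p i j * Real.log (y j / p i j) := by
          rw [e1]
          congr 1
          exact Finset.sum_congr rfl fun j hjF => by rw [e2 j hjF]
      _ ≤ _ := by rw [e1]; exact hj
  have hsum := Finset.sum_le_sum (fun i (_ : i ∈ (univ : Finset (Fin n))) => key i)
  rw [Finset.sum_add_distrib] at hsum
  linarith
end

section
/- Let z : ℝ → ℝ be measurable with 0 ≤ z t ≤ 1 for all t, and let α, φ : ℝ → ℝ be nonnegative measurable functions such that for every t ∈ ℝ the function τ ↦ α(τ) φ(τ − t) is integrable on [t, ∞). Define F : ℕ → ℝ → ℝ by F 0 = z and F (n+1) t = z t · exp( ∫_t^∞ (F n τ − 1) · α(τ) · φ(τ − t) dτ ). Then for every n and every t: (i) 0 ≤ F n t ≤ 1; (ii) F (n+1) t ≤ F n t; i.e., the sequence (F n t) is antitone in n and bounded in [0,1], and hence converges for every t. -/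
open MeasureTheory

/-- the p.g.fl. iteration `F n` of truncated EAH clusters is
`[0,1]`-valued, antitone in `n`, and hence converges pointwise. -/
theorem eah_pgfl_iteration_antitone
    (z α φ : ℝ → ℝ) (hz : Measurable z) (hz01 : ∀ t, z t ∈ Set.Icc (0 : ℝ) 1)
    (hα : Measurable α) (hα0 : ∀ t, 0 ≤ α t)
    (hφ : Measurable φ) (hφ0 : ∀ t, 0 ≤ φ t)
    (hint : ∀ t : ℝ, IntegrableOn (fun τ => α τ * φ (τ - t)) (Set.Ici t))
    (F : ℕ → ℝ → ℝ) (hF0 : F 0 = z)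
    (hFs : ∀ (n : ℕ) (t : ℝ), F (n + 1) t =
      z t * Real.exp (∫ τ in Set.Ici t, (F n τ - 1) * α τ * φ (τ - t))) :
    ∀ (n : ℕ) (t : ℝ), (0 ≤ F n t ∧ F n t ≤ 1) ∧ F (n + 1) t ≤ F n t ∧
      ∃ L : ℝ, Filter.Tendsto (fun m => F m t) Filter.atTop (nhds L) := by
  -- bounds and measurability, by simultaneous induction
  have key : ∀ n : ℕ, Measurable (F n) ∧ ∀ t, 0 ≤ F n t ∧ F n t ≤ 1 := by
    intro n
    induction n with
    | zero =>
      refine ⟨hF0 ▸ hz, fun t => ?_⟩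
      rw [hF0]; exact ⟨(hz01 t).1, (hz01 t).2⟩
    | succ n ih =>
      obtain ⟨hmeas, hbdd⟩ := ih
      -- the integrand as a function of the pair (t, τ)
      have hpair : Measurable (fun p : ℝ × ℝ =>
          Set.indicator (Set.Ici p.1) (fun τ => (F n τ - 1) * α τ * φ (τ - p.1)) p.2) := by
        have hset : MeasurableSet {p : ℝ × ℝ | p.1 ≤ p.2} :=
          measurableSet_le measurable_fst measurable_snd
        have hfun : Measurable (fun p : ℝ × ℝ => (F n p.2 - 1) * α p.2 * φ (p.2 - p.1)) :=
          (((hmeas.comp measurable_snd).sub measurable_const).mul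
            (hα.comp measurable_snd)).mul
            (hφ.comp (measurable_snd.sub measurable_fst))
        have : (fun p : ℝ × ℝ =>
            Set.indicator (Set.Ici p.1) (fun τ => (F n τ - 1) * α τ * φ (τ - p.1)) p.2)
            = Set.indicator {p : ℝ × ℝ | p.1 ≤ p.2}
              (fun p => (F n p.2 - 1) * α p.2 * φ (p.2 - p.1)) := by
          funext p
          simp only [Set.indicator_apply, Set.mem_Ici, Set.mem_setOf_eq]
        rw [this]
        exact hfun.indicator hset
      have hG : Measurable (fun t =>
          ∫ τ in Set.Ici t, (F n τ - 1) * α τ * φ (τ - t)) := by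
        have := (hpair.stronglyMeasurable).integral_prod_right' (ν := (volume : Measure ℝ))
        have heq : (fun t => ∫ τ in Set.Ici t, (F n τ - 1) * α τ * φ (τ - t))
            = fun t => ∫ τ, Set.indicator (Set.Ici t)
                (fun τ => (F n τ - 1) * α τ * φ (τ - t)) τ := by
          funext t
          rw [integral_indicator measurableSet_Ici]
        rw [heq]
        exact this.measurable
      constructor
      · have : F (n + 1) = fun t => z t * Real.exp
            (∫ τ in Set.Ici t, (F n τ - 1) * α τ * φ (τ - t)) := funext (hFs n)
        rw [this]
        exact hz.mul (Real.measurable_exp.comp hG)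
      · intro t
        have hI : (∫ τ in Set.Ici t, (F n τ - 1) * α τ * φ (τ - t)) ≤ 0 := by
          apply integral_nonpos
          intro τ
          show (F n τ - 1) * α τ * φ (τ - t) ≤ 0
          nlinarith [(hbdd τ).2, mul_nonneg (hα0 τ) (hφ0 (τ - t))]
        have hexp : Real.exp (∫ τ in Set.Ici t, (F n τ - 1) * α τ * φ (τ - t)) ≤ 1 :=
          Real.exp_le_one_iff.mpr hI
        rw [hFs n t]
        constructor
        · exact mul_nonneg (hz01 t).1 (Real.exp_pos _).le
        · calc z t * Real.exp _ ≤ 1 * 1 :=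
                mul_le_mul (hz01 t).2 hexp (Real.exp_pos _).le one_pos.le
          _ = 1 := one_mul 1
  -- integrability of integrands
  have hintg : ∀ (n : ℕ) (t : ℝ),
      IntegrableOn (fun τ => (F n τ - 1) * α τ * φ (τ - t)) (Set.Ici t) := by
    intro n t
    apply (hint t).mono' ((((key n).1.sub measurable_const).mul hα).mul
      (hφ.comp (measurable_id.sub measurable_const))).aestronglyMeasurable
    filter_upwards with τ
    have h1 : |F n τ - 1| ≤ 1 := by
      rw [abs_le]
      exact ⟨by linarith [((key n).2 τ).1], by linarith [((key n).2 τ).2]⟩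
    have h2 : 0 ≤ α τ * φ (τ - t) := mul_nonneg (hα0 τ) (hφ0 (τ - t))
    calc ‖(F n τ - 1) * α τ * φ (τ - t)‖ = |F n τ - 1| * (α τ * φ (τ - t)) := by
          rw [Real.norm_eq_abs, abs_mul, abs_mul, mul_assoc,
            abs_of_nonneg (hα0 τ), abs_of_nonneg (hφ0 (τ - t))]
    _ ≤ 1 * (α τ * φ (τ - t)) := mul_le_mul_of_nonneg_right h1 h2
    _ = α τ * φ (τ - t) := one_mul _
  -- antitone
  have hanti : ∀ (n : ℕ) (t : ℝ), F (n + 1) t ≤ F n t := by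
    intro n
    induction n with
    | zero =>
      intro t
      rw [hFs 0 t]
      have hI : (∫ τ in Set.Ici t, (F 0 τ - 1) * α τ * φ (τ - t)) ≤ 0 := by
        apply integral_nonpos
        intro τ
        show (F 0 τ - 1) * α τ * φ (τ - t) ≤ 0
        nlinarith [((key 0).2 τ).2, mul_nonneg (hα0 τ) (hφ0 (τ - t))]
      calc z t * Real.exp _ ≤ z t * 1 :=
            mul_le_mul_of_nonneg_left (Real.exp_le_one_iff.mpr hI) (hz01 t).1
      _ = z t := mul_one _
      _ = F 0 t := (congrFun hF0 t).symm
    | succ n ih =>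
      intro t
      rw [hFs (n + 1) t, hFs n t]
      have hmono : (∫ τ in Set.Ici t, (F (n + 1) τ - 1) * α τ * φ (τ - t))
          ≤ ∫ τ in Set.Ici t, (F n τ - 1) * α τ * φ (τ - t) := by
        apply integral_mono (hintg (n + 1) t) (hintg n t)
        intro τ
        show (F (n + 1) τ - 1) * α τ * φ (τ - t) ≤ (F n τ - 1) * α τ * φ (τ - t)
        nlinarith [ih τ, mul_nonneg (hα0 τ) (hφ0 (τ - t))]
      exact mul_le_mul_of_nonneg_left (Real.exp_le_exp.mpr hmono) (hz01 t).1
  intro n t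
  refine ⟨(key n).2 t, hanti n t, ?_⟩
  have hA : Antitone (fun m => F m t) := antitone_nat_of_succ_le fun m => hanti m t
  have hB : BddBelow (Set.range fun m => F m t) :=
    ⟨0, fun x ⟨m, hm⟩ => hm ▸ ((key m).2 t).1⟩
  exact ⟨_, tendsto_atTop_ciInf hA hB⟩
end

section
/- Let z : ℝ → ℝ be measurable with 0 ≤ z t ≤ 1 for all t, and let α, φ : ℝ → ℝ be nonnegative measurable functions such that for every t ∈ ℝ the function τ ↦ α(τ) φ(τ − t) is integrable on [t, ∞). Define F : ℕ → ℝ → ℝ by F 0 = z and F (n+1) t = z t · exp( ∫_t^∞ (F n τ − 1) · α(τ) · φ(τ − t) dτ ), and let F∞ t = inf_n F n t be the pointwise limit of this (pointwise antitone, [0,1]-valued) sequence. Then 0 ≤ F∞ t ≤ 1 for all t, and F∞ satisfies the functional equation F∞ t = z t · exp( ∫_t^∞ (F∞ τ − 1) · α(τ) · φ(τ − t) dτ ) for every t ∈ ℝ. -/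
open MeasureTheory

/-- the pointwise limit `F∞` of the p.g.fl. iteration satisfies the
functional equation (5) for the p.g.fl. of a full EAH cluster. -/
theorem eah_pgfl_functional_equation
    (z α φ : ℝ → ℝ) (hz : Measurable z) (hz01 : ∀ t, z t ∈ Set.Icc (0 : ℝ) 1)
    (hα : Measurable α) (hα0 : ∀ t, 0 ≤ α t)
    (hφ : Measurable φ) (hφ0 : ∀ t, 0 ≤ φ t)
    (hint : ∀ t : ℝ, IntegrableOn (fun τ => α τ * φ (τ - t)) (Set.Ici t))
    (F : ℕ → ℝ → ℝ) (hF0 : F 0 = z)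
    (hFs : ∀ (n : ℕ) (t : ℝ), F (n + 1) t =
      z t * Real.exp (∫ τ in Set.Ici t, (F n τ - 1) * α τ * φ (τ - t)))
    (Finf : ℝ → ℝ) (hFinf : ∀ t : ℝ, Finf t = ⨅ n : ℕ, F n t) :
    ∀ t : ℝ, (0 ≤ Finf t ∧ Finf t ≤ 1) ∧
      Finf t = z t * Real.exp (∫ τ in Set.Ici t, (Finf τ - 1) * α τ * φ (τ - t)) := by
  -- measurability of each F n
  have hmeas : ∀ n, Measurable (F n) := by
    intro n
    induction n with
    | zero => simpa [hF0] using hz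
    | succ n ih =>
      have hK : Measurable fun p : ℝ × ℝ =>
          if p.1 ≤ p.2 then (F n p.2 - 1) * α p.2 * φ (p.2 - p.1) else 0 := by
        refine Measurable.ite (measurableSet_le measurable_fst measurable_snd) ?_
          measurable_const
        exact (((ih.comp measurable_snd).sub measurable_const).mul
          (hα.comp measurable_snd)).mul (hφ.comp (measurable_snd.sub measurable_fst))
      have hI : Measurable fun t : ℝ =>
          ∫ τ, (if t ≤ τ then (F n τ - 1) * α τ * φ (τ - t) else 0) :=
        hK.stronglyMeasurable.integral_prod_right'.measurable
      have hI' : Measurable fun t : ℝ =>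
          ∫ τ in Set.Ici t, (F n τ - 1) * α τ * φ (τ - t) := by
        have heq : (fun t : ℝ => ∫ τ in Set.Ici t, (F n τ - 1) * α τ * φ (τ - t))
            = fun t : ℝ => ∫ τ, (if t ≤ τ then (F n τ - 1) * α τ * φ (τ - t) else 0) := by
          funext t
          rw [← integral_indicator measurableSet_Ici]
          simp only [Set.indicator_apply, Set.mem_Ici]
        rw [heq]; exact hI
      have : F (n + 1) = fun t => z t *
          Real.exp (∫ τ in Set.Ici t, (F n τ - 1) * α τ * φ (τ - t)) :=
        funext (hFs n)
      rw [this]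
      exact hz.mul (Real.measurable_exp.comp hI')
  -- bounds
  have hb : ∀ n t, 0 ≤ F n t ∧ F n t ≤ 1 := by
    intro n
    induction n with
    | zero => intro t; rw [hF0]; exact ⟨(hz01 t).1, (hz01 t).2⟩
    | succ n ih =>
      intro t
      have hnp : (∫ τ in Set.Ici t, (F n τ - 1) * α τ * φ (τ - t)) ≤ 0 := by
        refine integral_nonpos fun τ => ?_
        have h1 : F n τ - 1 ≤ 0 := by linarith [(ih τ).2]
        exact mul_nonpos_of_nonpos_of_nonneg
          (mul_nonpos_of_nonpos_of_nonneg h1 (hα0 τ)) (hφ0 (τ - t))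
      rw [hFs n t]
      constructor
      · exact mul_nonneg (hz01 t).1 (Real.exp_pos _).le
      · calc z t * Real.exp (∫ τ in Set.Ici t, (F n τ - 1) * α τ * φ (τ - t))
            ≤ 1 * 1 := by
              apply mul_le_mul (hz01 t).2 (Real.exp_le_one_iff.2 hnp)
                (Real.exp_pos _).le zero_le_one
          _ = 1 := mul_one 1
  -- integrability
  have hintg : ∀ (g : ℝ → ℝ), Measurable g → (∀ τ, 0 ≤ g τ ∧ g τ ≤ 1) → ∀ t,
      IntegrableOn (fun τ => (g τ - 1) * α τ * φ (τ - t)) (Set.Ici t) := by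
    intro g hg hg01 t
    refine MeasureTheory.Integrable.mono (hint t) ?_ (ae_of_all _ fun τ => ?_)
    · exact (((hg.sub measurable_const).mul hα).mul
        (hφ.comp (measurable_id.sub measurable_const))).aestronglyMeasurable
    · rw [Real.norm_eq_abs, Real.norm_eq_abs, abs_mul, abs_mul, abs_mul]
      have h1 : |g τ - 1| ≤ 1 := abs_le.2 ⟨by linarith [(hg01 τ).1], by linarith [(hg01 τ).2]⟩
      have h2 := mul_le_mul_of_nonneg_right
        (mul_le_mul_of_nonneg_right h1 (abs_nonneg (α τ))) (abs_nonneg (φ (τ - t)))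
      linarith
  -- antitone step
  have hstep : ∀ n t, F (n + 1) t ≤ F n t := by
    intro n
    induction n with
    | zero =>
      intro t
      rw [hFs 0 t]
      have hnp : (∫ τ in Set.Ici t, (F 0 τ - 1) * α τ * φ (τ - t)) ≤ 0 := by
        refine integral_nonpos fun τ => ?_
        have h1 : F 0 τ - 1 ≤ 0 := by linarith [(hb 0 τ).2]
        exact mul_nonpos_of_nonpos_of_nonneg
          (mul_nonpos_of_nonpos_of_nonneg h1 (hα0 τ)) (hφ0 (τ - t))
      calc z t * Real.exp _ ≤ z t * 1 :=
            mul_le_mul_of_nonneg_left (Real.exp_le_one_iff.2 hnp) (hz01 t).1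
        _ = z t := mul_one _
        _ = F 0 t := by rw [hF0]
    | succ n ih =>
      intro t
      rw [hFs (n + 1) t, hFs n t]
      have hle : (∫ τ in Set.Ici t, (F (n + 1) τ - 1) * α τ * φ (τ - t))
          ≤ ∫ τ in Set.Ici t, (F n τ - 1) * α τ * φ (τ - t) := by
        apply integral_mono (hintg (F (n + 1)) (hmeas (n + 1)) (hb (n + 1)) t)
          (hintg (F n) (hmeas n) (hb n) t)
        intro τ
        exact mul_le_mul_of_nonneg_right
          (mul_le_mul_of_nonneg_right (sub_le_sub_right (ih τ) 1) (hα0 τ)) (hφ0 (τ - t))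
      exact mul_le_mul_of_nonneg_left (Real.exp_le_exp.2 hle) (hz01 t).1
  have hanti : ∀ t, Antitone fun n => F n t := fun t =>
    antitone_nat_of_succ_le fun n => hstep n t
  have hbdd : ∀ t, BddBelow (Set.range fun n => F n t) := by
    intro t
    refine ⟨0, ?_⟩
    rintro x ⟨n, rfl⟩
    exact (hb n t).1
  -- pointwise convergence to Finf
  have hten : ∀ t, Filter.Tendsto (fun n => F n t) Filter.atTop (nhds (Finf t)) := by
    intro t
    rw [hFinf t]
    exact tendsto_atTop_ciInf (hanti t) (hbdd t)
  intro t
  have hFinf0 : 0 ≤ Finf t := by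
    rw [hFinf t]; exact le_ciInf fun n => (hb n t).1
  have hFinf1 : Finf t ≤ 1 := by
    rw [hFinf t]
    exact le_trans (ciInf_le (hbdd t) 0) (hb 0 t).2
  refine ⟨⟨hFinf0, hFinf1⟩, ?_⟩
  -- dominated convergence for the integrals
  have hI : Filter.Tendsto
      (fun n => ∫ τ in Set.Ici t, (F n τ - 1) * α τ * φ (τ - t)) Filter.atTop
      (nhds (∫ τ in Set.Ici t, (Finf τ - 1) * α τ * φ (τ - t))) := by
    apply MeasureTheory.tendsto_integral_of_dominated_convergence
      (fun τ => α τ * φ (τ - t))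
    · intro n
      exact ((((hmeas n).sub measurable_const).mul hα).mul
        (hφ.comp (measurable_id.sub measurable_const))).aestronglyMeasurable
    · exact hint t
    · intro n
      refine ae_of_all _ fun τ => ?_
      rw [Real.norm_eq_abs, abs_mul, abs_mul]
      have h1 : |F n τ - 1| ≤ 1 :=
        abs_le.2 ⟨by linarith [(hb n τ).1], by linarith [(hb n τ).2]⟩
      rw [abs_of_nonneg (hα0 τ), abs_of_nonneg (hφ0 (τ - t))]
      have h2 := mul_le_mul_of_nonneg_right
        (mul_le_mul_of_nonneg_right h1 (hα0 τ)) (hφ0 (τ - t))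
      linarith
    · refine ae_of_all _ fun τ => ?_
      exact (((hten τ).sub_const 1).mul_const (α τ)).mul_const (φ (τ - t))
  have h1 : Filter.Tendsto (fun n => F (n + 1) t) Filter.atTop
      (nhds (z t * Real.exp (∫ τ in Set.Ici t, (Finf τ - 1) * α τ * φ (τ - t)))) := by
    have : (fun n => F (n + 1) t) = fun n => z t *
        Real.exp (∫ τ in Set.Ici t, (F n τ - 1) * α τ * φ (τ - t)) :=
      funext fun n => hFs n t
    rw [this]
    exact Filter.Tendsto.mul tendsto_const_nhds
      ((Real.continuous_exp.tendsto _).comp hI)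
  have h2 : Filter.Tendsto (fun n => F (n + 1) t) Filter.atTop (nhds (Finf t)) :=
    (hten t).comp (Filter.tendsto_add_atTop_nat 1)
  exact tendsto_nhds_unique h2 h1
end
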